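/- Define f : ℝ → ℝ by f(y) := ∫₀^y 2√(√(1+z²) − 1) / (1+z²)^{5/4} dz. Then f is odd, and for every θ ∈ [0, π/2), f(tan θ) = 4(√2 − √(1 + cos θ)). -/

import Mathlib

/-!
The integrand is even, so `f` is odd. On `[0, ∞)` the integrand is the derivative of
`G y = 4 (√2 - √(1 + 1/√(1 + y²)))`, which vanishes at `0`; and `√(1 + tan² θ) = 1 / cos θ`
turns `G (tan θ)` into `4 (√2 - √(1 + cos θ))`.
-/

open Real Set intervalIntegral

theorem integral_zero_neg_of_even {E : Type*} [NormedAddCommGroup E] [NormedSpace ℝ E]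
    {g : ℝ → E} (hg : ∀ x, g (-x) = g x) (y : ℝ) :
    ∫ x in (0:ℝ)..-y, g x = -∫ x in (0:ℝ)..y, g x := by
  have h := integral_comp_neg (a := 0) (b := -y) g
  simp only [hg, neg_zero, neg_neg] at h
  rw [h, integral_symm]

theorem rpow_five_div_four_eq {a : ℝ} (ha : 0 ≤ a) : a ^ ((5:ℝ) / 4) = a * √(√a) := by
  rw [sqrt_eq_rpow, sqrt_eq_rpow, ← rpow_mul ha, show (5:ℝ) / 4 = 1 + 1 / 2 * (1 / 2) by norm_num,
    rpow_add' ha (by norm_num), rpow_one]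

theorem sqrt_sqrt_one_add_sq_sub_one_mul {x : ℝ} (hx : 0 ≤ x) :
    √(√(1 + x ^ 2) - 1) * √(√(1 + x ^ 2) + 1) = x := by
  rw [← sqrt_mul' _ (by positivity), mul_comm, ← mul_self_sub_one, mul_self_sqrt (by positivity),
    add_sub_cancel_left, sqrt_sq hx]

theorem sqrt_one_add_tan_sq {θ : ℝ} (hθ : 0 < cos θ) : √(1 + tan θ ^ 2) = (cos θ)⁻¹ := by
  rw [← inv_inv (1 + tan θ ^ 2), inv_one_add_tan_sq hθ.ne', sqrt_inv, sqrt_sq hθ.le]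

noncomputable def integrand (z : ℝ) : ℝ :=
  2 * √(√(1 + z ^ 2) - 1) / (1 + z ^ 2) ^ ((5:ℝ) / 4)

noncomputable def antideriv (y : ℝ) : ℝ :=
  4 * (√2 - √(1 + (√(1 + y ^ 2))⁻¹))

theorem continuous_integrand : Continuous integrand := by
  have h : Continuous fun z : ℝ => 1 + z ^ 2 := by fun_prop
  refine .div (continuous_const.mul (h.sqrt.sub continuous_const).sqrt)
    (h.rpow_const fun _ => .inr (by norm_num)) fun z => (rpow_pos_of_pos (by positivity) _).ne'

theorem integrand_neg (z : ℝ) : integrand (-z) = integrand z := by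
  simp only [integrand, even_two.neg_pow]

theorem antideriv_zero : antideriv 0 = 0 := by
  norm_num [antideriv]

theorem hasDerivAt_antideriv {x : ℝ} (hx : 0 ≤ x) : HasDerivAt antideriv (integrand x) x := by
  have hpos : (0:ℝ) < 1 + x ^ 2 := by positivity
  set s := √(1 + x ^ 2) with hs
  have hs0 : 0 < s := sqrt_pos.mpr hpos
  have hderiv : HasDerivAt antideriv (2 * x / (s ^ 3 * √(1 + s⁻¹))) x := by
    have hinv := (((hasDerivAt_pow 2 x).const_add 1).sqrt hpos.ne').inv hs0.ne'
    have hrad : 0 < 1 + s⁻¹ := by positivity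
    have : 0 < √(1 + s⁻¹) := sqrt_pos.mpr hrad
    refine ((hasDerivAt_const x √2).sub ((hinv.const_add 1).sqrt hrad.ne')).const_mul 4
      |>.congr_deriv ?_
    simp only [Pi.inv_apply, ← hs]
    field_simp
    ring
  convert hderiv using 1
  have hsplit : √(1 + s⁻¹) = √(s + 1) / √s := by
    rw [show 1 + s⁻¹ = (s + 1) / s by field_simp, sqrt_div (by positivity)]
  have hfactor : √(s - 1) * √(s + 1) = x := sqrt_sqrt_one_add_sq_sub_one_mul hx
  have hsqrt_sq : √s ^ 2 = s := sq_sqrt hs0.le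
  have : 0 < √s := sqrt_pos.mpr hs0
  have : 0 < √(s + 1) := sqrt_pos.mpr (by positivity)
  rw [integrand, rpow_five_div_four_eq hpos.le, ← hs, ← sq_sqrt hpos.le, ← hs, hsplit]
  field_simp
  linear_combination s * hfactor - x * hsqrt_sq

theorem integral_integrand {y : ℝ} (hy : 0 ≤ y) : ∫ z in (0:ℝ)..y, integrand z = antideriv y := by
  rw [integral_eq_sub_of_hasDerivAt (fun x hx => hasDerivAt_antideriv (uIcc_of_le hy ▸ hx).1)
    (continuous_integrand.intervalIntegrable 0 y), antideriv_zero, sub_zero]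

theorem f_odd_and_value
    (f : ℝ → ℝ)
    (hf : ∀ y : ℝ, f y =
      ∫ z in (0:ℝ)..y, 2 * Real.sqrt (Real.sqrt (1 + z ^ 2) - 1) / (1 + z ^ 2) ^ ((5:ℝ)/4)) :
    (∀ y : ℝ, f (-y) = -f y) ∧
    (∀ θ ∈ Ico (0:ℝ) (π / 2), f (Real.tan θ) = 4 * (Real.sqrt 2 - Real.sqrt (1 + Real.cos θ))) := by
  have hf' : ∀ y, f y = ∫ z in (0:ℝ)..y, integrand z := hf
  refine ⟨fun y => by rw [hf', hf', integral_zero_neg_of_even integrand_neg], ?_⟩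
  rintro θ ⟨hθ0, hθ⟩
  have hcos : 0 < cos θ := cos_pos_of_mem_Ioo ⟨by linarith [pi_pos], hθ⟩
  rw [hf', integral_integrand (tan_nonneg_of_nonneg_of_le_pi_div_two hθ0 hθ.le), antideriv,
    sqrt_one_add_tan_sq hcos, inv_inv]
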